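/- Under the same assumptions on ρ as above (C² symmetric positive density with integrable second derivative), with the constant M from the previous statement: for every s > 0, every Λ with the symmetric decay property, and every |v| ≤ 1, there exists ζ ∈ [-M/2, M/2] such that ∫_{-s}^{s} ρ(u+v) Λ(u) du = (1 + ζ v²) ∫_{-s}^{s} ρ(u) Λ(u) du. -/

import Mathlib

/-! Put `F t = ∫_{-s}^{s} ρ(u+t) Λ(u) du`. Differentiating under the integral sign, `F` is `C²`
with `F'' t = ∫_{-s}^{s} ρ''(u+t) Λ(u) du`, so the hypothesis bounds `|F''|` by `M F(0)` on
`[-1, 1]`, while `F'(0) = 0` because `ρ'` is odd and `Λ` is even. Taylor's theorem with the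
Lagrange remainder gives `F v - F 0 = F''(t) v² / 2` for some `t` between `0` and `v`, and
`ζ = F''(t) / (2 F(0))` works. -/

open MeasureTheory

def SymDecay (f : ℝ → ℝ) : Prop :=
  (∀ x, f (-x) = f x) ∧ AntitoneOn f (Set.Ici 0)

open Set Filter intervalIntegral

theorem Function.Even.deriv {E : Type*} [NormedAddCommGroup E] [NormedSpace ℝ E] {f : ℝ → E}
    (hf : f.Even) : (_root_.deriv f).Odd := fun x => by
  have h := deriv_comp_neg f (-x)
  rwa [funext hf, neg_neg] at h

theorem Function.Odd.intervalIntegral_neg_eq_zero {E : Type*} [NormedAddCommGroup E]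
    [NormedSpace ℝ E] {f : ℝ → E} (hf : f.Odd) (a : ℝ) : ∫ x in -a..a, f x = 0 := by
  have h := integral_comp_neg (a := -a) (b := a) f
  simp only [hf.eq, intervalIntegral.integral_neg, neg_neg, neg_eq_iff_add_eq_zero] at h
  rw [← two_smul ℝ] at h
  exact (smul_eq_zero.mp h).resolve_left two_ne_zero

theorem SymDecay.intervalIntegrable {Λ : ℝ → ℝ} (hΛ : SymDecay Λ) {s : ℝ}
    (hs : 0 ≤ s) :
    IntervalIntegrable Λ volume (-s) s := by
  have hmono : MonotoneOn Λ (Iic 0) := fun x hx y hy hxy => by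
    rw [← hΛ.1 x, ← hΛ.1 y]
    exact hΛ.2 (neg_nonneg.2 hy : 0 ≤ -y) (neg_nonneg.2 hx : 0 ≤ -x) (neg_le_neg hxy)
  refine (MonotoneOn.intervalIntegrable ?_).trans (b := 0) (AntitoneOn.intervalIntegrable ?_)
  · exact hmono.mono (by simp [uIcc_of_le (neg_nonpos.2 hs), Icc_subset_Iic_self])
  · exact hΛ.2.mono (by simp [uIcc_of_le hs, Icc_subset_Ici_self])

section IntegralShift

variable {Λ : ℝ → ℝ} {a b : ℝ}

theorem exists_bound_apply_add_of_mem_uIcc {f : ℝ → ℝ} (hf : Continuous f) (a b x₀ : ℝ) :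
    ∃ C, ∀ u ∈ uIcc a b, ∀ x ∈ Metric.closedBall x₀ 1, ‖f (u + x)‖ ≤ C := by
  have hK : IsCompact (uIcc a b ×ˢ Metric.closedBall x₀ 1) :=
    isCompact_uIcc.prod (isCompact_closedBall x₀ 1)
  obtain ⟨C, hC⟩ := hK.exists_bound_of_continuousOn (hf.comp continuous_add).continuousOn
  exact ⟨C, fun u hu x hx => hC (u, x) ⟨hu, hx⟩⟩

theorem continuous_integral_apply_add_mul {f : ℝ → ℝ} (hf : Continuous f)
    (hΛ : IntervalIntegrable Λ volume a b) :
    Continuous fun t => ∫ u in a..b, f (u + t) * Λ u := by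
  refine continuous_iff_continuousAt.2 fun t₀ => ?_
  obtain ⟨C, hC⟩ := exists_bound_apply_add_of_mem_uIcc hf a b t₀
  refine continuousAt_of_dominated_interval (bound := fun u => C * ‖Λ u‖) ?_ ?_
    (hΛ.norm.const_mul C) (ae_of_all _ fun u _ => by fun_prop)
  · exact Eventually.of_forall fun t =>
      (hf.comp (continuous_add_const t)).aestronglyMeasurable.mul hΛ.def'.aestronglyMeasurable
  · filter_upwards [Metric.closedBall_mem_nhds t₀ one_pos] with t ht
    refine ae_of_all _ fun u hu => ?_
    rw [norm_mul]
    exact mul_le_mul_of_nonneg_right (hC u (uIoc_subset_uIcc hu) t ht) (norm_nonneg _)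

theorem hasDerivAt_integral_apply_add_mul {f : ℝ → ℝ} (hf : ContDiff ℝ 1 f)
    (hΛ : IntervalIntegrable Λ volume a b) (t₀ : ℝ) :
    HasDerivAt (fun t => ∫ u in a..b, f (u + t) * Λ u)
      (∫ u in a..b, deriv f (u + t₀) * Λ u) t₀ := by
  have hf' : Continuous (deriv f) := hf.continuous_deriv le_rfl
  obtain ⟨C, hC⟩ := exists_bound_apply_add_of_mem_uIcc hf' a b t₀
  refine (hasDerivAt_integral_of_dominated_loc_of_deriv_le
    (F' := fun t u => deriv f (u + t) * Λ u) (bound := fun u => C * ‖Λ u‖)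
    (Metric.closedBall_mem_nhds t₀ one_pos) ?_ ?_ ?_ ?_ (hΛ.norm.const_mul C) ?_).2
  · exact Eventually.of_forall fun t =>
      (hf.continuous.comp (continuous_add_const t)).aestronglyMeasurable.mul
        hΛ.def'.aestronglyMeasurable
  · exact hΛ.continuousOn_mul (hf.continuous.comp (continuous_add_const t₀)).continuousOn
  · exact (hf'.comp (continuous_add_const t₀)).aestronglyMeasurable.mul
      hΛ.def'.aestronglyMeasurable
  · refine ae_of_all _ fun u hu t ht => ?_
    rw [norm_mul]
    exact mul_le_mul_of_nonneg_right (hC u (uIoc_subset_uIcc hu) t ht) (norm_nonneg _)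
  · refine ae_of_all _ fun u _ t _ => ?_
    have hfu := (hf.differentiable one_ne_zero (u + t)).hasDerivAt.comp_const_add u t
    exact hfu.mul_const (Λ u)

theorem deriv_integral_apply_add_mul {f : ℝ → ℝ} (hf : ContDiff ℝ 1 f)
    (hΛ : IntervalIntegrable Λ volume a b) :
    deriv (fun t => ∫ u in a..b, f (u + t) * Λ u) =
      fun t => ∫ u in a..b, deriv f (u + t) * Λ u :=
  funext fun t => (hasDerivAt_integral_apply_add_mul hf hΛ t).deriv

theorem contDiff_integral_apply_add_mul {n : ℕ} {f : ℝ → ℝ} (hf : ContDiff ℝ n f)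
    (hΛ : IntervalIntegrable Λ volume a b) :
    ContDiff ℝ n fun t => ∫ u in a..b, f (u + t) * Λ u := by
  induction n generalizing f with
  | zero => exact contDiff_zero.2 (continuous_integral_apply_add_mul hf.continuous hΛ)
  | succ k ih =>
    have hf1 : ContDiff ℝ 1 f := hf.of_le (by exact_mod_cast Nat.le_add_left 1 k)
    rw [Nat.cast_succ, contDiff_succ_iff_deriv] at hf ⊢
    refine ⟨fun t => (hasDerivAt_integral_apply_add_mul hf1 hΛ t).differentiableAt,
      by simp, ?_⟩
    rw [deriv_integral_apply_add_mul hf1 hΛ]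
    exact ih hf.2.2

end IntegralShift

theorem taylor_mean_remainder_lagrange_deriv_deriv {F : ℝ → ℝ} (hF : ContDiff ℝ 2 F)
    (x₀ x : ℝ) :
    ∃ t ∈ uIcc x₀ x,
      F x - F x₀ - deriv F x₀ * (x - x₀) = deriv (deriv F) t * (x - x₀) ^ 2 / 2 := by
  rcases eq_or_ne x₀ x with rfl | hx
  · exact ⟨x₀, left_mem_uIcc, by simp⟩
  obtain ⟨t, ht, h⟩ := taylor_mean_remainder_lagrange_iteratedDeriv (n := 1) hx hF.contDiffOn
  refine ⟨t, uIoo_subset_uIcc_self ht, ?_⟩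
  have hderiv : derivWithin F (uIcc x₀ x) x₀ = deriv F x₀ :=
    ((hF.differentiable two_ne_zero x₀).hasDerivAt.hasDerivWithinAt.derivWithin
      (uniqueDiffOn_uIcc hx x₀ left_mem_uIcc))
  rw [taylorWithinEval_succ, taylor_within_zero_eval, iteratedDerivWithin_one, hderiv,
    iteratedDeriv_succ, iteratedDeriv_one] at h
  norm_num at h
  linear_combination h

theorem exists_mem_Icc_eq_one_add_mul_mul {a b c d K : ℝ} (hK : 0 ≤ K) (hb : 0 ≤ b)
    (hd : |d| ≤ K * b) (h : a - b = d * c / 2) :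
    ∃ ζ ∈ Icc (-(K / 2)) (K / 2), a = (1 + ζ * c) * b := by
  rcases hb.eq_or_lt with rfl | hb
  · refine ⟨0, ⟨by linarith, by linarith⟩, ?_⟩
    have : d = 0 := abs_nonpos_iff.mp (by simpa using hd)
    simp_all
  refine ⟨d / (2 * b), ?_, ?_⟩
  · rw [mem_Icc, ← abs_le, abs_div, abs_of_pos (by positivity : 0 < 2 * b),
      div_le_iff₀ (by positivity)]
    linarith
  · field_simp
    linarith

theorem stmt10_general (ρ : ℝ → ℝ) (hρpos : ∀ x, 0 < ρ x) (hρC2 : ContDiff ℝ 2 ρ)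
    (hρeven : ∀ x, ρ (-x) = ρ x)
    (M : ℝ) (hM : 1 < M)
    (hMbound : ∀ s : ℝ, 0 < s → ∀ Λ : ℝ → ℝ, (∀ x, 0 ≤ Λ x) → SymDecay Λ →
      ∀ v : ℝ, |v| ≤ 1 →
        |∫ u in (-s)..s, deriv (deriv ρ) (u + v) * Λ u| ≤
          M * ∫ u in (-s)..s, ρ u * Λ u) :
    ∀ s : ℝ, 0 < s → ∀ Λ : ℝ → ℝ, (∀ x, 0 ≤ Λ x) → SymDecay Λ →
      ∀ v : ℝ, |v| ≤ 1 →
        ∃ ζ ∈ Set.Icc (-(M / 2)) (M / 2),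
          ∫ u in (-s)..s, ρ (u + v) * Λ u =
            (1 + ζ * v ^ 2) * ∫ u in (-s)..s, ρ u * Λ u := by
  intro s hs Λ hΛ hΛsym v hv
  have hΛint := hΛsym.intervalIntegrable hs.le
  have hρ' : ContDiff ℝ 1 (deriv ρ) := (contDiff_succ_iff_deriv.mp hρC2).2.2
  set F := fun t => ∫ u in (-s)..s, ρ (u + t) * Λ u
  have hFC2 : ContDiff ℝ 2 F := contDiff_integral_apply_add_mul hρC2 hΛint
  have hF' : deriv F = fun t => ∫ u in (-s)..s, deriv ρ (u + t) * Λ u :=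
    deriv_integral_apply_add_mul (hρC2.of_le one_le_two) hΛint
  have hF'' : deriv (deriv F) = fun t => ∫ u in (-s)..s, deriv (deriv ρ) (u + t) * Λ u := by
    rw [hF']
    exact deriv_integral_apply_add_mul hρ' hΛint
  have hF'0 : deriv F 0 = 0 := by
    have hodd := (Function.Even.deriv hρeven).mul_even hΛsym.1
    simpa [hF'] using hodd.intervalIntegral_neg_eq_zero s
  obtain ⟨t, ht, hTaylor⟩ := taylor_mean_remainder_lagrange_deriv_deriv hFC2 0 v
  have ht1 : |t| ≤ 1 := (by simpa using abs_sub_left_of_mem_uIcc ht : |t| ≤ |v|).trans hv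
  refine exists_mem_Icc_eq_one_add_mul_mul (by linarith)
    (integral_nonneg (by linarith) fun u _ => mul_nonneg (hρpos u).le (hΛ u))
    (by simpa only [hF''] using hMbound s hs Λ hΛ hΛsym t ht1) ?_
  rw [hF'0, hF''] at hTaylor
  simpa [F] using hTaylor

/-- Given a constant `M > 1` as in the second-derivative bound, for every `s > 0`,
symmetric decaying `Λ` and `|v| ≤ 1` there is `ζ ∈ [-M/2, M/2]` with
`∫_{-s}^s ρ(u+v) Λ(u) du = (1 + ζ v²) ∫_{-s}^s ρ(u) Λ(u) du`. -/
theorem stmt10 (ρ : ℝ → ℝ) (hρpos : ∀ x, 0 < ρ x) (hρC2 : ContDiff ℝ 2 ρ)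
    (hρeven : ∀ x, ρ (-x) = ρ x) (hρdec : AntitoneOn ρ (Set.Ici 0))
    (hρprob : ∫ x, ρ x = 1) (hρint : Integrable ρ)
    (hρ'' : Integrable (deriv (deriv ρ)))
    (M : ℝ) (hM : 1 < M)
    (hMbound : ∀ s : ℝ, 0 < s → ∀ Λ : ℝ → ℝ, (∀ x, 0 ≤ Λ x) → SymDecay Λ →
      ∀ v : ℝ, |v| ≤ 1 →
        |∫ u in (-s)..s, deriv (deriv ρ) (u + v) * Λ u| ≤
          M * ∫ u in (-s)..s, ρ u * Λ u) :
    ∀ s : ℝ, 0 < s → ∀ Λ : ℝ → ℝ, (∀ x, 0 ≤ Λ x) → SymDecay Λ →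
      ∀ v : ℝ, |v| ≤ 1 →
        ∃ ζ ∈ Set.Icc (-(M / 2)) (M / 2),
          ∫ u in (-s)..s, ρ (u + v) * Λ u =
            (1 + ζ * v ^ 2) * ∫ u in (-s)..s, ρ u * Λ u :=
  stmt10_general ρ hρpos hρC2 hρeven M hM hMbound
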